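/- arXiv:2209.01603 — 3 statements merged into one kernel-verified Lean document; each statement's English description precedes it below -/
import Mathlib

section
/- Let k be a field, n ≥ 1, and let D be an invertible n×n matrix over k that is diagonalizable with n distinct eigenvalues, none equal to 1. Suppose M is a unipotent matrix, l ⊆ k^n is a one-dimensional subspace, and N is a matrix with (N−1)(k^n) ⊆ l and (N−1)l = 0, such that N·M = D. Then l is spanned by a cyclic vector for D (i.e., some v ∈ l satisfies that v, Dv, …, D^{n−1}v span k^n). -/
/-!
Let `v` span `l` and let `W` be the `D`-cyclic subspace generated by `v`. Since
`D - M = (N - 1) M` has image in `l ≤ W`, the subspace `W` is also `M`-invariant and `D`, `M`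
induce the same endomorphism of `kⁿ ⧸ W`. That endomorphism minus one is surjective, because
`D - 1` is (no eigenvalue of `D` equals `1`), and nilpotent, because `M - 1` is; hence the
quotient is zero and `W` is everything. By Cayley–Hamilton, `W` is already spanned by
`v, Dv, …, Dⁿ⁻¹v`.
-/

open Polynomial Submodule

namespace Module.End

section Semiring

variable {R M : Type*} [Semiring R] [AddCommMonoid M] [Module R M]

theorem span_range_pow_apply_le_comap (f : Module.End R M) (v : M) :
    span R (Set.range fun m : ℕ => (f ^ m) v) ≤
      (span R (Set.range fun m : ℕ => (f ^ m) v)).comap f := by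
  rw [span_le]
  rintro _ ⟨m, rfl⟩
  exact subset_span ⟨m + 1, by simp only [pow_succ', mul_apply]⟩

theorem subsingleton_of_isNilpotent_of_surjective {f : Module.End R M} (hnil : IsNilpotent f)
    (hsurj : Function.Surjective f) : Subsingleton M := by
  obtain ⟨r, hr⟩ := hnil
  refine subsingleton_of_forall_eq 0 fun x => ?_
  obtain ⟨y, rfl⟩ := hsurj.iterate r x
  rw [← pow_apply, hr, LinearMap.zero_apply]

end Semiring

theorem aeval_apply_mem_span_range_fin_pow_apply {R M : Type*} [CommSemiring R]
    [AddCommMonoid M] [Module R M] (f : Module.End R M) (v : M) {q : R[X]} {d : ℕ}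
    (hq : q.degree < d) :
    aeval f q v ∈ span R (Set.range fun j : Fin d => (f ^ (j : ℕ)) v) := by
  rw [aeval_def, eval₂_eq_sum, ← sum_fin (fun e a => algebraMap R _ a * f ^ e) (by simp) hq,
    LinearMap.sum_apply]
  exact sum_mem fun j _ => by
    simpa [algebraMap_end_apply] using
      smul_mem (span R (Set.range fun j : Fin d => (f ^ (j : ℕ)) v)) (q.coeff j)
        (subset_span ⟨j, rfl⟩)

theorem span_range_fin_pow_apply_eq {K V : Type*} [Field K] [AddCommGroup V] [Module K V]
    [FiniteDimensional K V] (f : Module.End K V) (v : V) {d : ℕ} (hd : finrank K V ≤ d) :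
    span K (Set.range fun j : Fin d => (f ^ (j : ℕ)) v) =
      span K (Set.range fun m : ℕ => (f ^ m) v) := by
  refine le_antisymm
    (span_mono (Set.range_comp_subset_range (fun j : Fin d => (j : ℕ)) fun m => (f ^ m) v))
    (span_le.mpr ?_)
  rintro _ ⟨m, rfl⟩
  dsimp only
  rw [LinearMap.pow_eq_aeval_mod_charpoly]
  refine aeval_apply_mem_span_range_fin_pow_apply f v
    ((degree_modByMonic_lt _ f.charpoly_monic).trans_le ?_)
  rw [degree_eq_natDegree f.charpoly_monic.ne_zero, LinearMap.charpoly_natDegree]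
  exact_mod_cast hd

theorem surjective_sub_one_of_apply_basis_eq_smul {ι R M : Type*} [CommRing R] [AddCommGroup M]
    [Module R M] {f : Module.End R M} (b : Basis ι R M) (μ : ι → R) (hμ : ∀ i, IsUnit (μ i - 1))
    (hf : ∀ i, f (b i) = μ i • b i) :
    Function.Surjective ⇑(f - 1) := by
  rw [← LinearMap.range_eq_top, eq_top_iff, ← b.span_eq, span_le]
  rintro _ ⟨i, rfl⟩
  have hbi : (f - 1) (b i) = (μ i - 1) • b i := by simp [hf, sub_smul]
  exact ⟨(↑(hμ i).unit⁻¹ : R) • b i, by rw [map_smul, hbi, smul_smul, IsUnit.val_inv_mul, one_smul]⟩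

end Module.End

theorem Submodule.eq_top_of_sub_mem_of_isNilpotent {R M : Type*} [Ring R] [AddCommGroup M]
    [Module R M] (W : Submodule R M) {f g : Module.End R M} (hf : W ≤ W.comap f)
    (hfg : ∀ x, f x - g x ∈ W) (hg : IsNilpotent (g - 1)) (hf1 : Function.Surjective ⇑(f - 1)) :
    W = ⊤ := by
  have hfW : W ≤ W.comap (f - 1) := fun x hx => W.sub_mem (hf hx) hx
  have hgW : W ≤ W.comap (g - 1) := fun x hx => by
    simpa using W.sub_mem (hfW hx) (hfg x)
  have hQ : W.mapQ W (f - 1) hfW = W.mapQ W (g - 1) hgW := by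
    ext x
    simpa [Submodule.Quotient.eq] using hfg x
  rw [← Submodule.Quotient.subsingleton_iff]
  refine Module.End.subsingleton_of_isNilpotent_of_surjective (f := W.mapQ W (f - 1) hfW)
    (hQ ▸ Module.End.IsNilpotent.mapQ hgW hg) ?_
  rw [← LinearMap.range_eq_top, range_mapQ, LinearMap.range_eq_top.mpr hf1, Submodule.map_top,
    range_mkQ]

theorem stmt_0_general {k : Type*} [Field k] {n : ℕ}
    (D M N : Matrix (Fin n) (Fin n) k)
    (b : Module.Basis (Fin n) k (Fin n → k)) (μ : Fin n → k)
    (hμone : ∀ i, μ i ≠ 1)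
    (heig : ∀ i, D.mulVec (b i) = μ i • b i)
    (hM : IsNilpotent (M - 1))
    (l : Submodule k (Fin n → k)) (hl : Module.finrank k l = 1)
    (hN1 : ∀ x : Fin n → k, (N - 1).mulVec x ∈ l)
    (hNM : N * M = D) :
    ∃ v ∈ l, v ≠ 0 ∧
      Submodule.span k (Set.range fun j : Fin n => (D ^ (j : ℕ)).mulVec v) = ⊤ := by
  obtain ⟨⟨v, hvl⟩, hv0, hl_span⟩ := finrank_eq_one_iff'.mp hl
  set W := span k (Set.range fun m : ℕ => (Matrix.toLin' D ^ m) v)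
  have hlW : l ≤ W := fun x hx => by
    obtain ⟨c, hc⟩ := hl_span ⟨x, hx⟩
    rw [show x = c • v from (congrArg Subtype.val hc).symm]
    exact W.smul_mem c (subset_span ⟨0, by simp⟩)
  have hDM : ∀ x, Matrix.toLin' D x - Matrix.toLin' M x ∈ W := fun x => hlW <| by
    simpa [← hNM, sub_mul, Matrix.sub_mulVec] using hN1 (M.mulVec x)
  have hM' : IsNilpotent (Matrix.toLin' M - 1) := by
    rw [← Matrix.isNilpotent_toLin'_iff, map_sub, Matrix.toLin'_one] at hM
    exact hM
  have hD' : Function.Surjective ⇑(Matrix.toLin' D - 1) :=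
    Module.End.surjective_sub_one_of_apply_basis_eq_smul b μ
      (fun i => (sub_ne_zero.mpr (hμone i)).isUnit) heig
  have hW : W = ⊤ :=
    W.eq_top_of_sub_mem_of_isNilpotent (Module.End.span_range_pow_apply_le_comap _ v) hDM hM' hD'
  refine ⟨v, hvl, fun h => hv0 (Subtype.ext h), ?_⟩
  simp_rw [← Matrix.toLin'_apply, Matrix.toLin'_pow]
  rw [Module.End.span_range_fin_pow_apply_eq _ v (Module.finrank_fin_fun k).le]
  exact hW

/-- If `D = N * M` with `D` invertible, regular semisimple (diagonalizable with
`n` distinct eigenvalues, none equal to `1`), `M` unipotent and `N` in the unipotent radical of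
the parabolic stabilizing the line `l`, then `l` is spanned by a cyclic vector for `D`. -/
theorem stmt_0 {k : Type*} [Field k] {n : ℕ} (hn : 1 ≤ n)
    (D M N : Matrix (Fin n) (Fin n) k)
    (hD : IsUnit D)
    (b : Module.Basis (Fin n) k (Fin n → k)) (μ : Fin n → k)
    (hμinj : Function.Injective μ) (hμone : ∀ i, μ i ≠ 1)
    (heig : ∀ i, D.mulVec (b i) = μ i • b i)
    (hM : IsNilpotent (M - 1))
    (l : Submodule k (Fin n → k)) (hl : Module.finrank k l = 1)
    (hN1 : ∀ x : Fin n → k, (N - 1).mulVec x ∈ l)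
    (hN2 : ∀ x ∈ l, (N - 1).mulVec x = 0)
    (hNM : N * M = D) :
    ∃ v ∈ l, v ≠ 0 ∧
      Submodule.span k (Set.range fun j : Fin n => (D ^ (j : ℕ)).mulVec v) = ⊤ :=
  stmt_0_general D M N b μ hμone heig hM l hl hN1 hNM
end

section
/- Let V be a finite-dimensional vector space, M : V → V a regular unipotent endomorphism (i.e., M − 1 is nilpotent with one Jordan block), and l ⊆ V a line not contained in the image of M − 1. If A : V → V satisfies Im(A) ⊆ l, A(l) = 0, and (1 + A)·M is unipotent, then A = 0. -/
open Module LinearMap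

lemma stmt4_pow_finrank_eq_zero {k V : Type*} [Field k] [AddCommGroup V] [Module k V]
    [FiniteDimensional k V] {f : V →ₗ[k] V} (h : IsNilpotent f) :
    f ^ Module.finrank k V = 0 := by
  have h2 := h.charpoly_eq_X_pow_finrank
  simpa only [h2, map_pow, Polynomial.aeval_X] using f.aeval_self_charpoly

lemma stmt4_rank_pow {k V : Type*} [Field k] [AddCommGroup V] [Module k V]
    [FiniteDimensional k V] (N : V →ₗ[k] V) (h1 : Module.finrank k (LinearMap.ker N) = 1)
    (i : ℕ) :
    Module.finrank k V - i ≤ Module.finrank k (LinearMap.range (N ^ i)) := by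
  induction i with
  | zero =>
    rw [pow_zero, Module.End.one_eq_id, LinearMap.range_id, finrank_top]
    omega
  | succ i ih =>
    have hcomp : LinearMap.range (N ^ (i+1)) = (LinearMap.range (N ^ i)).map N := by
      rw [pow_succ']
      exact LinearMap.range_comp _ _
    set p := LinearMap.range (N ^ i) with hp
    have hrn := LinearMap.finrank_range_add_finrank_ker (N.domRestrict p)
    have hker : Module.finrank k (LinearMap.ker (N.domRestrict p)) ≤
        Module.finrank k (LinearMap.ker N) := by
      have hinj : Function.Injective
          (LinearMap.codRestrict (LinearMap.ker N)
            (p.subtype.comp (LinearMap.ker (N.domRestrict p)).subtype)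
            (fun x => by
              have hx := x.2
              rw [LinearMap.mem_ker, LinearMap.domRestrict_apply] at hx
              exact LinearMap.mem_ker.mpr hx)) := by
        intro a b hab
        have h := congrArg Subtype.val hab
        simp only [LinearMap.codRestrict_apply, LinearMap.comp_apply,
          Submodule.coe_subtype] at h
        apply Subtype.ext; apply Subtype.ext
        exact h
      exact LinearMap.finrank_le_finrank_of_injective hinj
    have hrange : LinearMap.range (N.domRestrict p) = p.map N := LinearMap.range_domRestrict _ _
    rw [hrange] at hrn
    rw [hcomp]
    omega

/-- If `M` is regular unipotent, `l` a line not contained in `Im (M - 1)`, and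
`A` satisfies `Im A ⊆ l`, `A l = 0` and `(1 + A) * M` is unipotent, then `A = 0`. -/
theorem stmt_4 {k V : Type*} [Field k] [AddCommGroup V] [Module k V] [FiniteDimensional k V]
    (M : V →ₗ[k] V) (hM : IsNilpotent (M - 1))
    (hMreg : Module.finrank k (LinearMap.range (M - 1)) = Module.finrank k V - 1)
    (l : Submodule k V) (hl : Module.finrank k l = 1)
    (hll : ¬ l ≤ LinearMap.range (M - 1))
    (A : V →ₗ[k] V) (hA1 : LinearMap.range A ≤ l) (hA2 : ∀ x ∈ l, A x = 0)
    (hunip : IsNilpotent ((1 + A) * M - 1)) :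
    A = 0 := by
  set n := Module.finrank k V with hn
  set N := M - 1 with hNdef
  have hn1 : 1 ≤ n := hl ▸ l.finrank_le
  have hNn : N ^ n = 0 := stmt4_pow_finrank_eq_zero hM
  have hkerN : Module.finrank k (LinearMap.ker N) = 1 := by
    have := N.finrank_range_add_finrank_ker
    omega
  have hrank := stmt4_rank_pow N hkerN
  -- ker (N^i) ≤ range N for i < n
  have hkerle : ∀ i, i < n → LinearMap.ker (N ^ i) ≤ LinearMap.range N := by
    intro i hi
    have h1 : LinearMap.range (N ^ (n - i)) ≤ LinearMap.ker (N ^ i) := by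
      rintro x ⟨w, rfl⟩
      rw [LinearMap.mem_ker, ← Module.End.mul_apply, ← pow_add]
      have he : i + (n - i) = n := by omega
      rw [he, hNn, LinearMap.zero_apply]
    have h2 : Module.finrank k (LinearMap.ker (N ^ i)) ≤
        Module.finrank k (LinearMap.range (N ^ (n - i))) := by
      have ha := (N ^ i).finrank_range_add_finrank_ker
      have hb := hrank i
      have hc := hrank (n - i)
      omega
    have heq := Submodule.eq_of_le_of_finrank_le h1 h2
    rw [← heq]
    have he : n - i = (n - i - 1) + 1 := by omega
    rw [he, pow_succ']
    rintro x ⟨w, rfl⟩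
    exact ⟨(N ^ (n - i - 1)) w, rfl⟩
  -- a generator of l outside range N
  obtain ⟨v, hvl, hvr⟩ := SetLike.not_le_iff_exists.mp hll
  have hv0 : v ≠ 0 := fun h => hvr (h ▸ (LinearMap.range N).zero_mem)
  have hspanv : Submodule.span k {v} = l := by
    apply Submodule.eq_of_le_of_finrank_le
      (Submodule.span_le.mpr (Set.singleton_subset_iff.mpr hvl))
    rw [hl, finrank_span_singleton hv0]
  have hmem : ∀ z ∈ l, ∃ c : k, z = c • v := by
    intro z hz
    rw [← hspanv] at hz
    obtain ⟨c, hc⟩ := Submodule.mem_span_singleton.mp hz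
    exact ⟨c, hc.symm⟩
  -- N^t v not in range N^(t+1)
  have hnotin : ∀ t, t < n → (N ^ t) v ∉ LinearMap.range (N ^ (t + 1)) := by
    rintro t ht ⟨w, hw⟩
    have h0 : (N ^ t) (v - N w) = 0 := by
      rw [map_sub]
      have he : (N ^ t) (N w) = (N ^ (t + 1)) w := by rw [pow_succ, Module.End.mul_apply]
      rw [he, hw, sub_self]
    have hvk : v - N w ∈ LinearMap.range N := hkerle t ht (LinearMap.mem_ker.mpr h0)
    have hvin : v ∈ LinearMap.range N := by
      have := add_mem hvk (⟨w, rfl⟩ : N w ∈ LinearMap.range N)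
      simpa using this
    exact hvr hvin
  -- the unipotent product
  set C := (1 + A) * M - 1 with hCdef
  have hCn : C ^ n = 0 := stmt4_pow_finrank_eq_zero hunip
  have hCx : ∀ x, C x = N x + A (M x) := by
    intro x
    simp only [hCdef, hNdef, LinearMap.sub_apply, Module.End.mul_apply, LinearMap.add_apply,
      Module.End.one_apply, map_add]
    abel
  -- the key descent step
  have step : ∀ t, t < n → (∀ x, (N ^ t) ((C ^ (n - t)) x) = 0) →
      ∀ x, (N ^ (t + 1)) ((C ^ (n - t - 1)) x) = 0 ∧ A (M ((C ^ (n - t - 1)) x)) = 0 := by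
    intro t ht hQ x
    set y := (C ^ (n - t - 1)) x with hy
    have hCy : (C ^ (n - t)) x = C y := by
      have he : n - t = (n - t - 1) + 1 := by omega
      rw [hy]
      conv_lhs => rw [he, pow_succ', Module.End.mul_apply]
    obtain ⟨c, hc⟩ := hmem (A (M y)) (hA1 ⟨M y, rfl⟩)
    have h0 := hQ x
    rw [hCy, hCx y, map_add, hc, map_smul] at h0
    have hNty : (N ^ t) (N y) = (N ^ (t + 1)) y := by rw [pow_succ, Module.End.mul_apply]
    rw [hNty] at h0
    have hc0 : c = 0 := by
      by_contra hc0
      apply hnotin t ht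
      refine ⟨c⁻¹ • (-y), ?_⟩
      have h1 : (N ^ (t + 1)) y = -(c • (N ^ t) v) := eq_neg_of_add_eq_zero_left h0
      rw [map_smul, map_neg, h1, neg_neg, smul_smul, inv_mul_cancel₀ hc0, one_smul]
    refine ⟨?_, ?_⟩
    · rw [hc0, zero_smul, add_zero] at h0
      exact h0
    · rw [hc, hc0, zero_smul]
  -- ascending chain
  have Q : ∀ t, t ≤ n → ∀ x, (N ^ t) ((C ^ (n - t)) x) = 0 := by
    intro t
    induction t with
    | zero =>
      intro _ x
      rw [pow_zero, Nat.sub_zero, Module.End.one_apply, hCn, LinearMap.zero_apply]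
    | succ t ih =>
      intro ht x
      have h := step t (by omega) (ih (by omega)) x
      have he : n - (t + 1) = n - t - 1 := by omega
      rw [he]
      exact h.1
  -- conclusion: A ∘ M = 0
  have hAM : ∀ x, A (M x) = 0 := by
    intro x
    have h := (step (n - 1) (by omega) (Q (n - 1) (by omega)) x).2
    have he : n - (n - 1) - 1 = 0 := by omega
    rw [he, pow_zero, Module.End.one_apply] at h
    exact h
  have hAx : ∀ x, A x = -A (N x) := by
    intro x
    have h := hAM x
    have hMx : M x = x + N x := by
      rw [hNdef]
      simp only [LinearMap.sub_apply, Module.End.one_apply]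
      abel
    rw [hMx, map_add] at h
    exact eq_neg_of_add_eq_zero_left h
  have hpow : ∀ (m : ℕ) (x : V), A x = ((-1 : k) ^ m) • A ((N ^ m) x) := by
    intro m
    induction m with
    | zero => intro x; simp
    | succ m ih =>
      intro x
      rw [ih x, hAx ((N ^ m) x)]
      have he : N ((N ^ m) x) = (N ^ (m + 1)) x := by rw [pow_succ', Module.End.mul_apply]
      rw [he, smul_neg, ← neg_smul]
      congr 1
      ring
  ext x
  have h := hpow n x
  rw [hNn, LinearMap.zero_apply, map_zero, smul_zero] at h
  simpa using h
end

section
/- Let (Vₙ, fₙₘ : Vₙ → Vₘ for n ≥ m) be an inverse system of finite-dimensional vector spaces over a field, indexed by the natural numbers. If the inverse limit lim Vₙ is zero, then the system is essentially zero: for every m there exists n > m with fₙₘ = 0. -/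
/-- An inverse system of finite-dimensional vector spaces over `ℕ` with zero
inverse limit is essentially zero. -/
theorem stmt_8 {k : Type*} [Field k] (V : ℕ → Type*)
    [∀ n, AddCommGroup (V n)] [∀ n, Module k (V n)] [∀ n, FiniteDimensional k (V n)]
    (f : ∀ m n : ℕ, m ≤ n → (V n →ₗ[k] V m))
    (hid : ∀ n, f n n le_rfl = LinearMap.id)
    (hcomp : ∀ m n p (hmn : m ≤ n) (hnp : n ≤ p),
      (f m n hmn).comp (f n p hnp) = f m p (hmn.trans hnp))
    (hlim : ∀ s : (∀ n, V n), (∀ m n (h : m ≤ n), f m n h (s n) = s m) → ∀ n, s n = 0) :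
    ∀ m, ∃ n, ∃ h : m < n, f m n h.le = 0 := by
  classical
  intro m
  by_contra hc
  push_neg at hc
  -- ranges are antitone
  have hmono : ∀ (j n p : ℕ) (h1 : j ≤ n) (h2 : n ≤ p),
      LinearMap.range (f j p (h1.trans h2)) ≤ LinearMap.range (f j n h1) := by
    intro j n p h1 h2
    rw [← hcomp j n p h1 h2]
    exact LinearMap.range_comp_le_range _ _
  -- stabilization of image chain at each level
  have stab : ∀ j : ℕ, ∃ N : ℕ, ∀ n, N ≤ n →
      LinearMap.range (f j (j + n) (Nat.le_add_right _ _)) =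
      LinearMap.range (f j (j + N) (Nat.le_add_right _ _)) := by
    intro j
    set d : ℕ → ℕ := fun n =>
      Module.finrank k (LinearMap.range (f j (j + n) (Nat.le_add_right _ _))) with hd
    have hne : (Set.range d).Nonempty := ⟨d 0, ⟨0, rfl⟩⟩
    obtain ⟨N, hN⟩ : ∃ N, d N = sInf (Set.range d) := Nat.sInf_mem hne
    refine ⟨N, fun n hn => ?_⟩
    have hle : LinearMap.range (f j (j + n) (Nat.le_add_right _ _)) ≤
        LinearMap.range (f j (j + N) (Nat.le_add_right _ _)) := by
      have := hmono j (j + N) (j + n) (Nat.le_add_right _ _) (Nat.add_le_add_left hn j)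
      exact this
    have hrank : d N ≤ d n := hN ▸ Nat.sInf_le ⟨n, rfl⟩
    exact Submodule.eq_of_le_of_finrank_le hle hrank
  choose N hNspec using stab
  -- the eventual image at level j
  set E : ∀ j : ℕ, Submodule k (V j) :=
    fun j => LinearMap.range (f j (j + N j) (Nat.le_add_right _ _)) with hE
  have E_eq : ∀ (j n : ℕ) (h0 : j ≤ n), j + N j ≤ n →
      LinearMap.range (f j n h0) = E j := by
    intro j n h0 hn
    obtain ⟨p, rfl⟩ : ∃ p, n = j + p := ⟨n - j, (Nat.add_sub_cancel' h0).symm⟩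
    have hp : N j ≤ p := Nat.le_of_add_le_add_left hn
    exact hNspec j p hp
  -- surjectivity of eventual images
  have surj : ∀ (j : ℕ) (y : V j), y ∈ E j →
      ∃ z : V (j + 1), z ∈ E (j + 1) ∧ f j (j + 1) (Nat.le_succ j) z = y := by
    intro j y hy
    set M : ℕ := max (j + N j) ((j + 1) + N (j + 1)) with hM
    have h1 : j ≤ M := le_trans (Nat.le_add_right _ _) (le_max_left _ _)
    have h2 : j + 1 ≤ M := le_trans (Nat.le_add_right _ _) (le_max_right _ _)
    have hyM : y ∈ LinearMap.range (f j M h1) := by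
      rw [E_eq j M h1 (le_max_left _ _)]; exact hy
    obtain ⟨w, hw⟩ := hyM
    refine ⟨f (j + 1) M h2 w, ?_, ?_⟩
    · rw [← E_eq (j + 1) M h2 (le_max_right _ _)]
      exact ⟨w, rfl⟩
    · have := LinearMap.congr_fun (hcomp j (j + 1) M (Nat.le_succ j) h2) w
      simpa [hw] using this
  -- the eventual image at level m is nonzero
  have hEm : E m ≠ ⊥ := by
    set n : ℕ := max (m + N m) (m + 1) with hn
    have hmn : m < n := lt_of_lt_of_le (Nat.lt_succ_self m) (le_max_right _ _)
    have hf : f m n hmn.le ≠ 0 := hc n hmn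
    have := E_eq m n hmn.le (le_max_left _ _)
    rw [← this]
    simpa [LinearMap.range_eq_bot] using hf
  obtain ⟨x, hxE, hx0⟩ := Submodule.exists_mem_ne_zero_of_ne_bot hEm
  -- pick preimages
  set pick : ∀ j : ℕ, V j → V (j + 1) := fun j y =>
    if h : y ∈ E j then (surj j y h).choose else 0 with hpick
  have pick_spec : ∀ (j : ℕ) (y : V j), y ∈ E j →
      pick j y ∈ E (j + 1) ∧ f j (j + 1) (Nat.le_succ j) (pick j y) = y := by
    intro j y h
    rw [hpick]; simp only [dif_pos h]
    exact (surj j y h).choose_spec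
  -- build the compatible sequence
  set s : ∀ n : ℕ, V n := fun n =>
    Nat.rec (f 0 m (Nat.zero_le m) x)
      (fun j sj => if h : j + 1 ≤ m then f (j + 1) m h x else pick j sj) n with hs
  have s_succ : ∀ j : ℕ, s (j + 1) =
      if h : j + 1 ≤ m then f (j + 1) m h x else pick j (s j) := fun j => rfl
  have s_le : ∀ (n : ℕ) (h : n ≤ m), s n = f n m h x := by
    intro n h
    cases n with
    | zero => rfl
    | succ j => rw [s_succ j, dif_pos h]
  have s_m : s m = x := by
    rw [s_le m le_rfl, hid m]; rfl
  have s_mem : ∀ n, m ≤ n → s n ∈ E n := by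
    intro n hn
    induction n, hn using Nat.le_induction with
    | base => rw [s_m]; exact hxE
    | succ j hj ih =>
      rw [s_succ j, dif_neg (by omega : ¬ j + 1 ≤ m)]
      exact (pick_spec j (s j) ih).1
  have s_step : ∀ n : ℕ, f n (n + 1) (Nat.le_succ n) (s (n + 1)) = s n := by
    intro n
    by_cases h : n + 1 ≤ m
    · rw [s_succ n, dif_pos h, s_le n (by omega)]
      exact LinearMap.congr_fun (hcomp n (n + 1) m (Nat.le_succ n) h) x
    · rw [s_succ n, dif_neg h]
      exact (pick_spec n (s n) (s_mem n (by omega))).2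
  have s_compat : ∀ (a b : ℕ) (h : a ≤ b), f a b h (s b) = s a := by
    have key : ∀ (d a : ℕ), f a (a + d) (Nat.le_add_right _ _) (s (a + d)) = s a := by
      intro d
      induction d with
      | zero => intro a; simpa using LinearMap.congr_fun (hid a) (s a)
      | succ d ih =>
        intro a
        have hcn := LinearMap.congr_fun
          (hcomp a (a + d) (a + d + 1) (Nat.le_add_right _ _) (Nat.le_succ _))
          (s (a + d + 1))
        calc f a (a + (d + 1)) (Nat.le_add_right _ _) (s (a + (d + 1)))
            = f a (a + d) (Nat.le_add_right _ _)
                (f (a + d) (a + d + 1) (Nat.le_succ _) (s (a + d + 1))) := hcn.symm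
          _ = f a (a + d) (Nat.le_add_right _ _) (s (a + d)) := by rw [s_step (a + d)]
          _ = s a := ih a
    intro a b h
    obtain ⟨d, rfl⟩ : ∃ d, b = a + d := ⟨b - a, (Nat.add_sub_cancel' h).symm⟩
    exact key d a
  have := hlim s s_compat m
  rw [s_m] at this
  exact hx0 this
end
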